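/- arXiv:2401.00730 — 2 statements merged into one kernel-verified Lean document; each statement's English description precedes it below -/
import Mathlib

section
/- Let H be a finite-dimensional complex inner product space, A : H → H selfadjoint positive definite, B : H → H selfadjoint and injective, and let {φ_ℓ} be a basis with -Bφ_ℓ = λ_ℓ A φ_ℓ and (Aφ_ℓ, φ_{ℓ'}) = δ_{ℓℓ'}. Suppose all λ_ℓ have the same sign σ and let (ε, α) with ε ≥ 0, σ·Im α ≤ 0, ε + |α| > 0. Then iεA + αB : H → H is invertible, and there exists c > 1 (independent of ε, α) such that (1/c)‖v‖ ≤ √(ε² + |α|²) · ‖(iεA + αB)^{-1} v‖ ≤ c‖v‖ for all v ∈ H. -/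
open Complex

/-!
In the basis `φ_ℓ` the operator `iεA + αB` is diagonal relative to `A`: it maps `φ_ℓ` to
`μ_ℓ • Aφ_ℓ` with `μ_ℓ = iε - λ_ℓ α`. Hence in the coordinates `u ↦ (u_ℓ)` on the source and
`v ↦ ((φ_ℓ, v))_ℓ` on the target it is multiplication by `μ`, and both coordinate maps are
isomorphisms of the finite-dimensional space `H`. The sign condition makes `iε` and `-λ_ℓ α`
have imaginary parts of the same sign, so `|μ_ℓ|² ≥ ε² + λ_ℓ² |α|²`, which together with the
trivial upper bound pins `|μ_ℓ|` between two multiples of `√(ε² + |α|²)`.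
-/

lemma norm_I_mul_sub_mul_ofReal_le {ε Λ lam : ℝ} (α : ℂ) (hΛ : 1 ≤ Λ) (hlam : |lam| ≤ Λ) :
    ‖I * ε - α * lam‖ ≤ 2 * Λ * √(ε ^ 2 + ‖α‖ ^ 2) := by
  have hε : |ε| ≤ √(ε ^ 2 + ‖α‖ ^ 2) := Real.abs_le_sqrt (by nlinarith [norm_nonneg α])
  have hα : ‖α‖ ≤ √(ε ^ 2 + ‖α‖ ^ 2) := Real.le_sqrt_of_sq_le (by nlinarith)
  calc ‖I * ε - α * lam‖ ≤ |ε| + ‖α‖ * |lam| := by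
        simpa [norm_mul] using norm_sub_le (I * ε) (α * lam)
    _ ≤ 2 * Λ * √(ε ^ 2 + ‖α‖ ^ 2) := by
        nlinarith [norm_nonneg α, abs_nonneg lam, abs_nonneg ε]

lemma sqrt_sq_add_sq_le_mul_norm_I_mul_sub {ε Λ lam : ℝ} {α : ℂ} (hε : 0 ≤ ε) (hΛ : 1 ≤ Λ)
    (hlam : 1 ≤ Λ * |lam|) (hsign : lam * α.im ≤ 0) :
    √(ε ^ 2 + ‖α‖ ^ 2) ≤ Λ * ‖I * ε - α * lam‖ := by
  have hlam2 : 1 ≤ Λ ^ 2 * lam ^ 2 := by nlinarith [sq_abs lam, abs_nonneg lam]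
  rw [Real.sqrt_le_left (by positivity), mul_pow, Complex.sq_norm, Complex.sq_norm,
    Complex.normSq_apply, Complex.normSq_apply]
  simp only [sub_re, sub_im, mul_re, mul_im, I_re, I_im, ofReal_re, ofReal_im]
  ring_nf
  nlinarith [mul_nonneg (sub_nonneg.mpr hlam2) (add_nonneg (sq_nonneg α.re) (sq_nonneg α.im)),
    mul_nonneg (sub_nonneg.mpr (one_le_pow₀ hΛ : 1 ≤ Λ ^ 2)) (sq_nonneg ε),
    mul_nonneg (sq_nonneg Λ) (mul_nonneg hε (neg_nonneg.mpr hsign))]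

lemma exists_one_le_abs_le_and_one_le_mul_abs {ι : Type*} [Finite ι] {f : ι → ℝ}
    (hf : ∀ i, f i ≠ 0) : ∃ Λ ≥ 1, ∀ i, |f i| ≤ Λ ∧ 1 ≤ Λ * |f i| := by
  obtain ⟨Λ, hΛ⟩ := Finite.bddAbove_range fun i => max |f i| |f i|⁻¹
  refine ⟨max Λ 1, le_max_right _ _, fun i => ?_⟩
  have hi : max |f i| |f i|⁻¹ ≤ max Λ 1 := (hΛ ⟨i, rfl⟩).trans (le_max_left _ _)
  have hpos : 0 < |f i| := abs_pos.mpr (hf i)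
  refine ⟨(le_max_left _ _).trans hi, ?_⟩
  calc 1 = |f i|⁻¹ * |f i| := (inv_mul_cancel₀ hpos.ne').symm
    _ ≤ max Λ 1 * |f i| := by gcongr; exact (le_max_right _ _).trans hi

section EigenSymbol

variable {ι : Type*} (ε : ℝ) (α : ℂ) (lam : ι → ℝ)

def eigenSymbol : ι → ℂ := fun ℓ => I * ε - α * lam ℓ

variable {ε α lam}

lemma I_mul_smul_add_smul_apply_basis {H : Type*} [AddCommGroup H] [Module ℂ H]
    {A B : H →ₗ[ℂ] H} {φ : ι → H} (heig : ∀ ℓ, -(B (φ ℓ)) = (lam ℓ : ℂ) • A (φ ℓ)) (j : ι) :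
    ((I * ε) • A + α • B) (φ j) = eigenSymbol ε α lam j • A (φ j) := by
  have hB : B (φ j) = -((lam j : ℂ) • A (φ j)) := neg_eq_iff_eq_neg.mp (heig j)
  simp only [eigenSymbol, LinearMap.add_apply, LinearMap.smul_apply, hB]
  module

variable {Λ : ℝ} (hΛ : 1 ≤ Λ)
include hΛ

lemma norm_eigenSymbol_apply_pos (hε : 0 ≤ ε) {ℓ : ι} (hlam : 1 ≤ Λ * |lam ℓ|)
    (hsign : lam ℓ * α.im ≤ 0) (hr : 0 < √(ε ^ 2 + ‖α‖ ^ 2)) : 0 < ‖eigenSymbol ε α lam ℓ‖ :=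
  pos_of_mul_pos_right
    (hr.trans_le (sqrt_sq_add_sq_le_mul_norm_I_mul_sub hε hΛ hlam hsign)) (by positivity)

variable [Fintype ι]

lemma norm_eigenSymbol_le (hlam : ∀ ℓ, |lam ℓ| ≤ Λ) :
    ‖eigenSymbol ε α lam‖ ≤ 2 * Λ * √(ε ^ 2 + ‖α‖ ^ 2) :=
  (pi_norm_le_iff_of_nonneg (by positivity)).mpr fun ℓ =>
    norm_I_mul_sub_mul_ofReal_le α hΛ (hlam ℓ)

lemma norm_inv_eigenSymbol_le (hε : 0 ≤ ε) (hlam : ∀ ℓ, 1 ≤ Λ * |lam ℓ|)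
    (hsign : ∀ ℓ, lam ℓ * α.im ≤ 0) (hr : 0 < √(ε ^ 2 + ‖α‖ ^ 2)) :
    ‖(eigenSymbol ε α lam)⁻¹‖ ≤ Λ / √(ε ^ 2 + ‖α‖ ^ 2) :=
  (pi_norm_le_iff_of_nonneg (by positivity)).mpr fun ℓ => by
    have hμ := norm_eigenSymbol_apply_pos hΛ hε (hlam ℓ) (hsign ℓ) hr
    rw [Pi.inv_apply, norm_inv, le_div_iff₀ hr]
    calc ‖eigenSymbol ε α lam ℓ‖⁻¹ * √(ε ^ 2 + ‖α‖ ^ 2)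
        ≤ ‖eigenSymbol ε α lam ℓ‖⁻¹ * (Λ * ‖eigenSymbol ε α lam ℓ‖) := by
          gcongr; exact sqrt_sq_add_sq_le_mul_norm_I_mul_sub hε hΛ (hlam ℓ) (hsign ℓ)
      _ = Λ := by field_simp

end EigenSymbol

lemma LinearMap.exists_bilipschitz_bound_of_injective {𝕜 E F : Type*}
    [NontriviallyNormedField 𝕜] [CompleteSpace 𝕜] [NormedAddCommGroup E] [NormedSpace 𝕜 E]
    [FiniteDimensional 𝕜 E] [NormedAddCommGroup F] [NormedSpace 𝕜 F]
    (f : E →ₗ[𝕜] F) (hf : Function.Injective f) :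
    ∃ K ≥ 1, ∀ u, ‖u‖ ≤ K * ‖f u‖ ∧ ‖f u‖ ≤ K * ‖u‖ := by
  obtain ⟨K, -, hK⟩ := f.injective_iff_antilipschitz.mp hf
  let g : E →L[𝕜] F := LinearMap.toContinuousLinearMap f
  refine ⟨max 1 (max K ‖g‖), le_max_left _ _, fun u => ⟨?_, ?_⟩⟩
  · calc ‖u‖ ≤ K * ‖f u‖ := ZeroHomClass.bound_of_antilipschitz f hK u
      _ ≤ _ := by gcongr; exact (le_max_left _ _).trans (le_max_right _ _)
  · calc ‖f u‖ = ‖g u‖ := rfl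
      _ ≤ ‖g‖ * ‖u‖ := g.le_opNorm u
      _ ≤ _ := by gcongr; exact (le_max_right _ _).trans (le_max_right _ _)

lemma LinearMap.bijective_of_le_mul_norm {K E : Type*} [Field K] [NormedAddCommGroup E]
    [Module K E] [FiniteDimensional K E] (f : E →ₗ[K] E) {r C : ℝ} (hr : 0 < r)
    (h : ∀ u, r * ‖u‖ ≤ C * ‖f u‖) : Function.Bijective f := by
  have hinj : Function.Injective f := (injective_iff_map_eq_zero f).mpr fun u hu => by
    have hu' := h u
    rw [hu, norm_zero, mul_zero] at hu'
    exact norm_le_zero_iff.mp (nonpos_of_mul_nonpos_right hu' hr)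
  exact ⟨hinj, LinearMap.injective_iff_surjective.mp hinj⟩

namespace Module.Basis

variable {H ι : Type*} [NormedAddCommGroup H] [InnerProductSpace ℂ H] (b : Basis ι ℂ H)

noncomputable def innerCoords : H →ₗ[ℂ] ι → ℂ := LinearMap.pi fun ℓ => innerₛₗ ℂ (b ℓ)

@[simp]
lemma innerCoords_apply (v : H) (ℓ : ι) : b.innerCoords v ℓ = inner ℂ (b ℓ) v := rfl

lemma innerCoords_injective : Function.Injective b.innerCoords := by
  intro v w h
  have hvw : (innerₛₗ ℂ).flip v = (innerₛₗ ℂ).flip w :=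
    b.ext fun ℓ => by simpa using congrFun h ℓ
  exact ext_inner_left ℂ fun u => LinearMap.congr_fun hvw u

variable [Fintype ι] [DecidableEq ι] {A : H →ₗ[ℂ] H}
  (hnorm : ∀ ℓ ℓ', inner ℂ (A (b ℓ)) (b ℓ') = if ℓ = ℓ' then (1 : ℂ) else 0)
include hnorm

lemma innerCoords_apply_of_apply_eq_smul {T : H →ₗ[ℂ] H} {κ : ι → ℂ}
    (hT : ∀ j, T (b j) = κ j • A (b j)) (u : H) :
    b.innerCoords (T u) = κ * b.equivFun u := by
  funext ℓ
  have hA : ∀ j, inner ℂ (b ℓ) (A (b j)) = if j = ℓ then 1 else 0 := fun j => by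
    rw [← inner_conj_symm, hnorm]; split_ifs <;> simp
  rw [innerCoords_apply, Pi.mul_apply, b.equivFun_apply]
  conv_lhs => rw [← b.sum_repr u]
  simp only [map_sum, map_smul, hT, inner_sum, inner_smul_right, hA, mul_ite, mul_one, mul_zero,
    Finset.sum_ite_eq', Finset.mem_univ, if_true]
  ring

lemma exists_bound_of_apply_eq_smul [FiniteDimensional ℂ H] :
    ∃ K ≥ 1, ∀ (T : H →ₗ[ℂ] H) (κ : ι → ℂ), (∀ j, T (b j) = κ j • A (b j)) → ∀ u,
      ‖T u‖ ≤ K * ‖κ‖ * ‖u‖ ∧ ((∀ ℓ, κ ℓ ≠ 0) → ‖u‖ ≤ K * ‖κ⁻¹‖ * ‖T u‖) := by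
  obtain ⟨K₁, hK₁, hE⟩ :=
    b.equivFun.toLinearMap.exists_bilipschitz_bound_of_injective b.equivFun.injective
  obtain ⟨K₂, hK₂, hD⟩ :=
    b.innerCoords.exists_bilipschitz_bound_of_injective b.innerCoords_injective
  refine ⟨K₁ * K₂, one_le_mul_of_one_le_of_one_le hK₁ hK₂, fun T κ hT u => ⟨?_, fun hκ => ?_⟩⟩
  · calc ‖T u‖ ≤ K₂ * ‖κ * b.equivFun u‖ := by
          rw [← b.innerCoords_apply_of_apply_eq_smul hnorm hT]; exact (hD _).1
      _ ≤ K₂ * (‖κ‖ * (K₁ * ‖u‖)) := by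
          gcongr; exact (norm_mul_le _ _).trans (by gcongr; exact (hE u).2)
      _ = K₁ * K₂ * ‖κ‖ * ‖u‖ := by ring
  · have hinv : κ⁻¹ * (κ * b.equivFun u) = b.equivFun u := by
      funext ℓ; simp [inv_mul_cancel_left₀ (hκ ℓ)]
    calc ‖u‖ ≤ K₁ * ‖κ⁻¹ * (κ * b.equivFun u)‖ := by rw [hinv]; exact (hE u).1
      _ ≤ K₁ * (‖κ⁻¹‖ * (K₂ * ‖T u‖)) := by
          gcongr
          refine (norm_mul_le _ _).trans ?_
          rw [← b.innerCoords_apply_of_apply_eq_smul hnorm hT]; gcongr; exact (hD _).2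
      _ = K₁ * K₂ * ‖κ⁻¹‖ * ‖T u‖ := by ring

end Module.Basis

theorem operator_inverse_bound_general
    {H : Type*} [NormedAddCommGroup H] [InnerProductSpace ℂ H]
    [FiniteDimensional ℂ H]
    (A B : H →ₗ[ℂ] H)
    (m : ℕ) (b : Module.Basis (Fin m) ℂ H) (lam : Fin m → ℝ)
    (heig : ∀ ℓ, -(B (b ℓ)) = (lam ℓ : ℂ) • A (b ℓ))
    (hnorm : ∀ ℓ ℓ' : Fin m, (inner ℂ (A (b ℓ)) (b ℓ') : ℂ) = if ℓ = ℓ' then 1 else 0)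
    (σ : ℝ) (hsign : ∀ ℓ, 0 < σ * lam ℓ) :
    ∃ c > (1 : ℝ), ∀ (ε : ℝ) (α : ℂ), 0 ≤ ε → σ * α.im ≤ 0 →
      0 < ε + ‖α‖ →
      Function.Bijective (fun u : H => (Complex.I * ε) • A u + α • B u) ∧
      ∀ u : H,
        (1 / c) * ‖(Complex.I * ε) • A u + α • B u‖ ≤
            Real.sqrt (ε ^ 2 + ‖α‖ ^ 2) * ‖u‖ ∧
          Real.sqrt (ε ^ 2 + ‖α‖ ^ 2) * ‖u‖ ≤
            c * ‖(Complex.I * ε) • A u + α • B u‖ := by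
  obtain ⟨K, hK, hbound⟩ := b.exists_bound_of_apply_eq_smul hnorm
  obtain ⟨Λ, hΛ, hlam⟩ := exists_one_le_abs_le_and_one_le_mul_abs fun ℓ =>
    right_ne_zero_of_mul (hsign ℓ).ne'
  refine ⟨2 * Λ * K, by nlinarith, fun ε α hε hα hpos => ?_⟩
  set r := √(ε ^ 2 + ‖α‖ ^ 2)
  have hr : 0 < r :=
    Real.sqrt_pos.mpr (by nlinarith [norm_nonneg α, mul_pos hpos hpos, sq_nonneg (ε - ‖α‖)])
  have hsign' : ∀ ℓ, lam ℓ * α.im ≤ 0 := fun ℓ => by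
    nlinarith [hsign ℓ, mul_nonpos_of_nonneg_of_nonpos (sq_nonneg (lam ℓ)) hα]
  set L : H →ₗ[ℂ] H := (I * ε) • A + α • B
  have hL := hbound L _ (I_mul_smul_add_smul_apply_basis heig)
  have hμ_ne : ∀ ℓ, eigenSymbol ε α lam ℓ ≠ 0 := fun ℓ =>
    norm_pos_iff.mp (norm_eigenSymbol_apply_pos hΛ hε (hlam ℓ).2 (hsign' ℓ) hr)
  have hupper : ∀ u, ‖L u‖ ≤ 2 * Λ * K * (r * ‖u‖) := fun u =>
    calc ‖L u‖ ≤ K * (2 * Λ * r) * ‖u‖ :=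
          (hL u).1.trans (by gcongr; exact norm_eigenSymbol_le hΛ fun ℓ => (hlam ℓ).1)
      _ = 2 * Λ * K * (r * ‖u‖) := by ring
  have hlower : ∀ u, r * ‖u‖ ≤ 2 * Λ * K * ‖L u‖ := fun u =>
    calc r * ‖u‖ ≤ r * (K * (Λ / r) * ‖L u‖) := by
          gcongr
          exact ((hL u).2 hμ_ne).trans
            (by gcongr; exact norm_inv_eigenSymbol_le hΛ hε (fun ℓ => (hlam ℓ).2) hsign' hr)
      _ ≤ 2 * Λ * K * ‖L u‖ := by field_simp; nlinarith [norm_nonneg (L u)]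
  refine ⟨L.bijective_of_le_mul_norm hr hlower, fun u => ⟨?_, hlower u⟩⟩
  rw [one_div_mul_eq_div, div_le_iff₀ (by positivity)]
  exact (hupper u).trans_eq (mul_comm _ _)

/-- With `A` selfadjoint positive definite, `B` selfadjoint
injective on a finite-dimensional complex Hilbert space `H`, and a basis `φ_ℓ`
with `-Bφ_ℓ = λ_ℓ Aφ_ℓ`, `(Aφ_ℓ, φ_ℓ') = δ_{ℓℓ'}`, all `λ_ℓ` of the same sign
`σ`: for `(ε, α)` with `ε ≥ 0`, `σ·Im α ≤ 0`, `ε + |α| > 0`, the operator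
`iεA + αB` is bijective and there is `c > 1` (independent of `ε, α`) with
`(1/c)‖Lu‖ ≤ √(ε² + |α|²)·‖u‖ ≤ c‖Lu‖` for all `u` (equivalently, the stated
two-sided bound for `v = Lu` and `(iεA + αB)⁻¹ v = u`). -/
theorem operator_inverse_bound
    {H : Type*} [NormedAddCommGroup H] [InnerProductSpace ℂ H]
    [FiniteDimensional ℂ H]
    (A B : H →ₗ[ℂ] H) (hA : A.IsSymmetric) (hB : B.IsSymmetric)
    (hApos : ∀ x : H, x ≠ 0 → 0 < (inner ℂ (A x) x : ℂ).re)
    (hBinj : Function.Injective B)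
    (m : ℕ) (hm : 0 < m) (b : Module.Basis (Fin m) ℂ H) (lam : Fin m → ℝ)
    (heig : ∀ ℓ, -(B (b ℓ)) = (lam ℓ : ℂ) • A (b ℓ))
    (hnorm : ∀ ℓ ℓ' : Fin m, (inner ℂ (A (b ℓ)) (b ℓ') : ℂ) = if ℓ = ℓ' then 1 else 0)
    (σ : ℝ) (hσ : σ = 1 ∨ σ = -1) (hsign : ∀ ℓ, 0 < σ * lam ℓ) :
    ∃ c > (1 : ℝ), ∀ (ε : ℝ) (α : ℂ), 0 ≤ ε → σ * α.im ≤ 0 →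
      0 < ε + ‖α‖ →
      Function.Bijective (fun u : H => (Complex.I * ε) • A u + α • B u) ∧
      ∀ u : H,
        (1 / c) * ‖(Complex.I * ε) • A u + α • B u‖ ≤
            Real.sqrt (ε ^ 2 + ‖α‖ ^ 2) * ‖u‖ ∧
          Real.sqrt (ε ^ 2 + ‖α‖ ^ 2) * ‖u‖ ≤
            c * ‖(Complex.I * ε) • A u + α • B u‖ :=
  operator_inverse_bound_general A B m b lam heig hnorm σ hsign
end

section
/- Let ω > k > 0 and n > 1 satisfy nk² > ω². Define z = √(nk² - ω²) and suppose √(ω² - k²) sin z + z cos z = 0. Define φ(x₁, x₂) = e^{iω x₁} · sin(z x₂) for 0 < x₂ ≤ 1 and φ(x₁, x₂) = e^{iω x₁} · sin(z) · e^{-√(ω² - k²)(x₂ - 1)} for x₂ > 1. Then φ is C¹ across x₂ = 1 (i.e. φ and ∂₂φ are continuous there), φ(x₁, 0) = 0, Δφ + k² n φ = 0 for 0 < x₂ < 1, and Δφ + k² φ = 0 for x₂ > 1. -/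
/-!
Write `a = √(ω² - k²)`. The mode separates as `φ(x₁, x₂) = e^{iωx₁} ψ(x₂)`, where `ψ` is glued
at `x₂ = 1` from `sin (z x₂)` and `sin z · e^{-a(x₂ - 1)}`. Away from the interface each piece
satisfies `ψ'' = -z² ψ` resp. `ψ'' = a² ψ`, while `∂₁² e^{iωx₁} = -ω² e^{iωx₁}`; since
`z² = nk² - ω²` and `a² = ω² - k²` these are the two Helmholtz equations. At `x₂ = 1` the two pieces agree, and the
dispersion relation `a sin z + z cos z = 0` says that their derivatives agree as well, so the glued
profile is `C¹`.
-/

open Complex Real Set Filter Topology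

section Piecewise

variable {α E : Type*} [NormedAddCommGroup E] [NormedSpace ℝ E] {c t : ℝ}

lemma eventuallyEq_ite_le_of_lt {f g : ℝ → α} (h : t < c) :
    (fun s => if s ≤ c then f s else g s) =ᶠ[𝓝 t] f := by
  filter_upwards [Iio_mem_nhds h] with s hs using if_pos hs.le

lemma eventuallyEq_ite_le_of_gt {f g : ℝ → α} (h : c < t) :
    (fun s => if s ≤ c then f s else g s) =ᶠ[𝓝 t] g := by
  filter_upwards [Ioi_mem_nhds h] with s hs using if_neg (not_le.mpr hs)

lemma HasDerivAt.ite_le {f g : ℝ → E} {x : E} (hf : HasDerivAt f x c) (hg : HasDerivAt g x c)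
    (hfg : f c = g c) : HasDerivAt (fun s => if s ≤ c then f s else g s) x c := by
  have hl : HasDerivWithinAt (fun s => if s ≤ c then f s else g s) x (Iic c) c :=
    hf.hasDerivWithinAt.congr (fun s hs => if_pos hs) (if_pos le_rfl)
  have hr : HasDerivWithinAt (fun s => if s ≤ c then f s else g s) x (Ici c) c := by
    refine hg.hasDerivWithinAt.congr (fun s hs => ?_) (by rw [if_pos le_rfl, hfg])
    rcases (mem_Ici.mp hs).eq_or_lt with rfl | hs
    · rw [if_pos le_rfl, hfg]
    · exact if_neg (not_le.mpr hs)
  simpa using hl.union hr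

lemma deriv_ite_le {f g f' g' : ℝ → E} (hf : ∀ s, HasDerivAt f (f' s) s)
    (hg : ∀ s, HasDerivAt g (g' s) s) (hfg : f c = g c) (hfg' : f' c = g' c) :
    deriv (fun s => if s ≤ c then f s else g s) = fun s => if s ≤ c then f' s else g' s := by
  funext s
  rcases lt_trichotomy s c with hs | rfl | hs
  · rw [(eventuallyEq_ite_le_of_lt hs).deriv_eq, (hf s).deriv, if_pos hs.le]
  · rw [((hf s).ite_le (hfg' ▸ hg s) hfg).deriv, if_pos le_rfl]
  · rw [(eventuallyEq_ite_le_of_gt hs).deriv_eq, (hg s).deriv, if_neg (not_le.mpr hs)]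

lemma deriv_deriv_ite_le_of_lt {f g : ℝ → E} (h : t < c) :
    deriv (deriv fun s => if s ≤ c then f s else g s) t = deriv (deriv f) t :=
  (eventuallyEq_ite_le_of_lt h).deriv.deriv_eq

lemma deriv_deriv_ite_le_of_gt {f g : ℝ → E} (h : c < t) :
    deriv (deriv fun s => if s ≤ c then f s else g s) t = deriv (deriv g) t :=
  (eventuallyEq_ite_le_of_gt h).deriv.deriv_eq

lemma continuous_ite_le [TopologicalSpace α] {f g : ℝ → α} (hf : Continuous f)
    (hg : Continuous g) (hfg : f c = g c) : Continuous fun s => if s ≤ c then f s else g s :=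
  hf.if_le hg continuous_id continuous_const fun _ hs => hs ▸ hfg

lemma continuous_deriv_ite_le {f g f' g' : ℝ → E} (hf : ∀ s, HasDerivAt f (f' s) s)
    (hg : ∀ s, HasDerivAt g (g' s) s) (hf' : Continuous f') (hg' : Continuous g')
    (hfg : f c = g c) (hfg' : f' c = g' c) :
    Continuous (deriv fun s => if s ≤ c then f s else g s) := by
  rw [deriv_ite_le hf hg hfg hfg']
  exact continuous_ite_le hf' hg' hfg'

end Piecewise

lemma hasDerivAt_mul_cexp_mul_sub (C c t₀ : ℂ) (t : ℝ) :
    HasDerivAt (fun s : ℝ => C * cexp (c * (s - t₀))) (c * (C * cexp (c * (t - t₀)))) t := by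
  have h : HasDerivAt (fun w : ℂ => C * cexp (c * (w - t₀))) (c * (C * cexp (c * (t - t₀)))) t :=
    ((((hasDerivAt_id' (t : ℂ)).sub_const t₀).const_mul c).cexp.const_mul C).congr_deriv
      (by ring)
  exact h.comp_ofReal

lemma deriv_deriv_mul_cexp_mul_sub (C c t₀ : ℂ) (t : ℝ) :
    deriv (deriv fun s : ℝ => C * cexp (c * (s - t₀))) t = c ^ 2 * (C * cexp (c * (t - t₀))) := by
  rw [funext fun s => (hasDerivAt_mul_cexp_mul_sub C c t₀ s).deriv,
    ((hasDerivAt_mul_cexp_mul_sub C c t₀ t).const_mul c).deriv]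
  ring

lemma deriv_deriv_cexp_mul_mul (c C : ℂ) (t : ℝ) :
    deriv (deriv fun s : ℝ => cexp (c * s) * C) t = c ^ 2 * (cexp (c * t) * C) := by
  simpa only [sub_zero, mul_comm C] using deriv_deriv_mul_cexp_mul_sub C c 0 t

lemma hasDerivAt_mul_ofReal_sin (C : ℂ) (z t : ℝ) :
    HasDerivAt (fun s : ℝ => C * (Real.sin (z * s) : ℂ)) (C * (z * Real.cos (z * t) : ℝ)) t := by
  have h : HasDerivAt (fun s => Real.sin (z * s)) (z * Real.cos (z * t)) t :=
    ((hasDerivAt_id' t).const_mul z).sin.congr_deriv (by ring)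
  exact h.ofReal_comp.const_mul C

lemma deriv_deriv_mul_ofReal_sin (C : ℂ) (z t : ℝ) :
    deriv (deriv fun s : ℝ => C * (Real.sin (z * s) : ℂ)) t
      = -(z : ℂ) ^ 2 * (C * (Real.sin (z * t) : ℂ)) := by
  have h : HasDerivAt (fun s => z * Real.cos (z * s)) (-z ^ 2 * Real.sin (z * t)) t :=
    (((hasDerivAt_id' t).const_mul z).cos.const_mul z).congr_deriv (by ring)
  rw [funext fun s => (hasDerivAt_mul_ofReal_sin C z s).deriv, (h.ofReal_comp.const_mul C).deriv]
  push_cast; ring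

theorem guided_mode_properties_general (k ω n : ℝ) (hk : 0 < k) (hω : k < ω)
    (hnk : ω ^ 2 < n * k ^ 2)
    (z : ℝ) (hz : z = Real.sqrt (n * k ^ 2 - ω ^ 2))
    (hdisp : Real.sqrt (ω ^ 2 - k ^ 2) * Real.sin z + z * Real.cos z = 0)
    (φ : ℝ → ℝ → ℂ)
    (hφ : ∀ x₁ x₂ : ℝ, φ x₁ x₂ =
      if x₂ ≤ 1 then Complex.exp (Complex.I * ω * x₁) * ((Real.sin (z * x₂) : ℝ) : ℂ)
      else Complex.exp (Complex.I * ω * x₁) * ((Real.sin z : ℝ) : ℂ) *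
        Complex.exp (-(Real.sqrt (ω ^ 2 - k ^ 2) : ℂ) * ((x₂ : ℂ) - 1))) :
    (∀ x₁ : ℝ, ContinuousAt (fun x₂ => φ x₁ x₂) 1) ∧
    (∀ x₁ : ℝ, ContinuousAt (deriv (fun x₂ => φ x₁ x₂)) 1) ∧
    (∀ x₁ : ℝ, φ x₁ 0 = 0) ∧
    (∀ x₁ x₂ : ℝ, 0 < x₂ → x₂ < 1 →
      deriv (deriv (fun y => φ y x₂)) x₁ + deriv (deriv (fun y => φ x₁ y)) x₂
        + (k ^ 2 * n : ℂ) * φ x₁ x₂ = 0) ∧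
    (∀ x₁ x₂ : ℝ, 1 < x₂ →
      deriv (deriv (fun y => φ y x₂)) x₁ + deriv (deriv (fun y => φ x₁ y)) x₂
        + (k ^ 2 : ℂ) * φ x₁ x₂ = 0) := by
  set a := √(ω ^ 2 - k ^ 2)
  have ha : (a : ℂ) ^ 2 = ω ^ 2 - k ^ 2 := by
    exact_mod_cast Real.sq_sqrt (by nlinarith : 0 ≤ ω ^ 2 - k ^ 2)
  have hz2 : (z : ℂ) ^ 2 = n * k ^ 2 - ω ^ 2 := by
    rw [hz]; exact_mod_cast Real.sq_sqrt (by linarith : 0 ≤ n * k ^ 2 - ω ^ 2)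
  have hprofile (x₁ : ℝ) := funext (hφ x₁)
  have hsep (x₁ x₂ : ℝ) : φ x₁ x₂ = cexp (I * ω * x₁) * φ 0 x₂ := by
    simp only [hφ, Complex.ofReal_zero, mul_zero, Complex.exp_zero, one_mul]
    split_ifs <;> ring
  have hΔ₁ (x₁ x₂ : ℝ) : deriv (deriv fun y => φ y x₂) x₁ = -ω ^ 2 * φ x₁ x₂ := by
    rw [show (fun y => φ y x₂) = fun y : ℝ => cexp (I * ω * y) * φ 0 x₂ from funext (hsep · x₂),
      deriv_deriv_cexp_mul_mul, ← hsep, mul_pow, I_sq]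
    ring
  refine ⟨fun x₁ => ?_, fun x₁ => ?_, fun x₁ => by simp [hφ], fun x₁ x₂ _ h1 => ?_,
    fun x₁ x₂ h1 => ?_⟩
  · rw [hprofile]
    exact (continuous_ite_le (by fun_prop) (by fun_prop) (by simp)).continuousAt
  · have hmatch : (z * Complex.cos z : ℂ) = -(a * Complex.sin z) := by exact_mod_cast by linarith
    rw [hprofile]
    refine (continuous_deriv_ite_le (hasDerivAt_mul_ofReal_sin _ z)
      (hasDerivAt_mul_cexp_mul_sub _ _ 1) (by fun_prop) (by fun_prop) (by simp) ?_).continuousAt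
    simp only [mul_one, ofReal_mul, ofReal_cos, ofReal_sin, ofReal_one, sub_self, mul_zero,
      Complex.exp_zero, neg_mul]
    linear_combination cexp (I * ω * x₁) * hmatch
  · rw [hΔ₁, hφ x₁ x₂, if_pos h1.le, hprofile, deriv_deriv_ite_le_of_lt h1,
      deriv_deriv_mul_ofReal_sin]
    linear_combination (-(cexp (I * ω * x₁) * (Real.sin (z * x₂) : ℂ))) * hz2
  · rw [hΔ₁, hφ x₁ x₂, if_neg h1.not_ge, hprofile, deriv_deriv_ite_le_of_gt h1,
      deriv_deriv_mul_cexp_mul_sub]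
    linear_combination (cexp (I * ω * x₁) * (Real.sin z : ℂ) * cexp (-a * (x₂ - 1))) * ha

/-- With `z = √(nk² - ω²)` satisfying the dispersion relation
`√(ω² - k²) sin z + z cos z = 0`, the mode
`φ(x₁,x₂) = e^{iωx₁} sin(zx₂)` for `x₂ ≤ 1`,
`φ(x₁,x₂) = e^{iωx₁} sin(z) e^{-√(ω²-k²)(x₂-1)}` for `x₂ > 1`,
is `C¹` across `x₂ = 1` (φ and ∂₂φ continuous there), vanishes at `x₂ = 0`,
and satisfies `Δφ + k²nφ = 0` for `0 < x₂ < 1` and `Δφ + k²φ = 0` for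
`x₂ > 1`. -/
theorem guided_mode_properties (k ω n : ℝ) (hk : 0 < k) (hω : k < ω)
    (hn : 1 < n) (hnk : ω ^ 2 < n * k ^ 2)
    (z : ℝ) (hz : z = Real.sqrt (n * k ^ 2 - ω ^ 2))
    (hdisp : Real.sqrt (ω ^ 2 - k ^ 2) * Real.sin z + z * Real.cos z = 0)
    (φ : ℝ → ℝ → ℂ)
    (hφ : ∀ x₁ x₂ : ℝ, φ x₁ x₂ =
      if x₂ ≤ 1 then Complex.exp (Complex.I * ω * x₁) * ((Real.sin (z * x₂) : ℝ) : ℂ)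
      else Complex.exp (Complex.I * ω * x₁) * ((Real.sin z : ℝ) : ℂ) *
        Complex.exp (-(Real.sqrt (ω ^ 2 - k ^ 2) : ℂ) * ((x₂ : ℂ) - 1))) :
    (∀ x₁ : ℝ, ContinuousAt (fun x₂ => φ x₁ x₂) 1) ∧
    (∀ x₁ : ℝ, ContinuousAt (deriv (fun x₂ => φ x₁ x₂)) 1) ∧
    (∀ x₁ : ℝ, φ x₁ 0 = 0) ∧
    (∀ x₁ x₂ : ℝ, 0 < x₂ → x₂ < 1 →
      deriv (deriv (fun y => φ y x₂)) x₁ + deriv (deriv (fun y => φ x₁ y)) x₂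
        + (k ^ 2 * n : ℂ) * φ x₁ x₂ = 0) ∧
    (∀ x₁ x₂ : ℝ, 1 < x₂ →
      deriv (deriv (fun y => φ y x₂)) x₁ + deriv (deriv (fun y => φ x₁ y)) x₂
        + (k ^ 2 : ℂ) * φ x₁ x₂ = 0) :=
  guided_mode_properties_general k ω n hk hω hnk z hz hdisp φ hφ
end
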